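/- arXiv:1807.03638 — 2 statements merged into one kernel-verified Lean document; each statement's English description precedes it below -/
import Mathlib

section
/- Let (R, α) be a regular Hom-Lie conformal superalgebra and f : R → R an even ℂ[∂]-linear map commuting with α that is a Hom-Nijenhuis operator. Then for every t ∈ ℂ, the deformed bracket [a_λ b]_t := [a_λ b] + t[a_λ b]_N, where [a_λ b]_N = [f(a)_λ b] + [a_λ f(b)] − f([a_λ b]), makes (R, [·_λ·]_t, α) a Hom-Lie conformal superalgebra. -/
noncomputable section

namespace HLCS

open scoped BigOperators

/-- Evaluation at `l : ℂ` of a polynomial (in `λ`) with coefficients in `M`,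
encoded as a finitely supported family of coefficients. -/
def pev {M : Type} [AddCommGroup M] [Module ℂ M] (l : ℂ) (p : ℕ →₀ M) : M :=
  p.sum fun n r => l ^ n • r

/-- Evaluation of a polynomial with coefficients in `M` at an operator `T`
(used for substitutions such as `-λ - ∂`). -/
def pevOp {M : Type} [AddCommGroup M] [Module ℂ M] (T : Module.End ℂ M) (p : ℕ →₀ M) : M :=
  p.sum fun n r => (T ^ n) r

/-- The super sign `(-1)^{|a||b|}` attached to parities `i`, `j`. -/
def sg (i j : ZMod 2) : ℂ := (-1 : ℂ) ^ (i * j).val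

/-- The data of a `ℤ₂`-graded `ℂ[∂]`-module `R` with an endomorphism `α` and a
`ℂ`-bilinear `λ`-bracket with values in `ℂ[λ] ⊗ R` (encoded by its coefficients). -/
structure Data (R : Type) [AddCommGroup R] [Module ℂ R] where
  der : Module.End ℂ R
  alpha : Module.End ℂ R
  G : ZMod 2 → Submodule ℂ R
  br : R →ₗ[ℂ] R →ₗ[ℂ] (ℕ →₀ R)

namespace Data

variable {R : Type} [AddCommGroup R] [Module ℂ R] (S : Data R)

/-- `[a_λ b]` evaluated at `λ = l`. -/
def lb (l : ℂ) (a b : R) : R := pev l (S.br a b)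

/-- `[a_{-l-∂} b]` : the bracket with `-l - ∂` substituted for `λ`. -/
def lbOp (l : ℂ) (a b : R) : R :=
  pevOp ((-l) • (1 : Module.End ℂ R) - S.der) (S.br a b)

/-- Multiplicativity: `α [a_λ b] = [α(a)_λ α(b)]`. -/
def Mult : Prop := ∀ (l : ℂ) (a b : R), S.alpha (S.lb l a b) = S.lb l (S.alpha a) (S.alpha b)

end Data

variable {R : Type} [AddCommGroup R] [Module ℂ R]

/-- `(R, α)` with the given data is a Hom-Lie conformal superalgebra.
All polynomial identities in `λ, μ` are stated by evaluating at arbitrary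
complex numbers (which is equivalent, `ℂ` being infinite). -/
structure IsHLCS (S : Data R) : Prop where
  internal : DirectSum.IsInternal S.G
  der_even : ∀ i, ∀ a ∈ S.G i, S.der a ∈ S.G i
  alpha_even : ∀ i, ∀ a ∈ S.G i, S.alpha a ∈ S.G i
  alpha_der : ∀ a, S.alpha (S.der a) = S.der (S.alpha a)
  br_grade : ∀ i j, ∀ a ∈ S.G i, ∀ b ∈ S.G j, ∀ n, S.br a b n ∈ S.G (i + j)
  conf_left : ∀ (l : ℂ) (a b : R), S.lb l (S.der a) b = -l • S.lb l a b
  conf_right : ∀ (l : ℂ) (a b : R), S.lb l a (S.der b) = S.der (S.lb l a b) + l • S.lb l a b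
  skew : ∀ i j, ∀ a ∈ S.G i, ∀ b ∈ S.G j, ∀ l : ℂ,
    S.lb l a b = (-sg i j) • S.lbOp l b a
  jacobi : ∀ i j, ∀ a ∈ S.G i, ∀ b ∈ S.G j, ∀ (c : R) (l m : ℂ),
    S.lb l (S.alpha a) (S.lb m b c) =
      S.lb (l + m) (S.lb l a b) (S.alpha c) + sg i j • S.lb m (S.alpha b) (S.lb l a c)

end HLCS

/-!
Write `[a_λ b]_t = [a_λ b] + t [a_λ b]_N`. Conformal sesquilinearity, skew-symmetry and the
grading are linear conditions, so they pass from `[·_λ·]` to `[·_λ·]_N` because `f` is even and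
commutes with `∂`. The Hom-Jacobiator of `[·_λ·]_t` is a polynomial of degree two in `t`: its
constant term is the Hom-Jacobiator of `[·_λ·]`; its linear term is
`Jac(f a, b, c) + Jac(a, f b, c) + Jac(a, b, f c) - f (Jac(a, b, c))`, which vanishes since `f`
commutes with `α`; its quadratic term is the Hom-Jacobiator of `[·_λ·]_N`. Applying `f` to the
vanishing linear term and using the Nijenhuis identity `f [a_λ b]_N = [f(a)_λ f(b)]` turns the
latter into a sum of Jacobi identities with two of the three arguments replaced by their images
under `f`.
-/

namespace HLCS

section Evaluation

variable {M : Type} [AddCommGroup M] [Module ℂ M]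

lemma pev_eq_lsum (l : ℂ) (p : ℕ →₀ M) :
    pev l p = Finsupp.lsum ℂ (fun n => (l ^ n) • (LinearMap.id : M →ₗ[ℂ] M)) p := rfl

lemma pevOp_eq_lsum (T : Module.End ℂ M) (p : ℕ →₀ M) :
    pevOp T p = Finsupp.lsum ℂ (fun n => T ^ n) p := rfl

lemma pev_add (l : ℂ) (p q : ℕ →₀ M) : pev l (p + q) = pev l p + pev l q := by
  simp only [pev_eq_lsum, map_add]

lemma pev_sub (l : ℂ) (p q : ℕ →₀ M) : pev l (p - q) = pev l p - pev l q := by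
  simp only [pev_eq_lsum, map_sub]

lemma pev_smul (l c : ℂ) (p : ℕ →₀ M) : pev l (c • p) = c • pev l p := by
  simp only [pev_eq_lsum, map_smul]

lemma pevOp_add (T : Module.End ℂ M) (p q : ℕ →₀ M) :
    pevOp T (p + q) = pevOp T p + pevOp T q := by
  simp only [pevOp_eq_lsum, map_add]

lemma pevOp_sub (T : Module.End ℂ M) (p q : ℕ →₀ M) :
    pevOp T (p - q) = pevOp T p - pevOp T q := by
  simp only [pevOp_eq_lsum, map_sub]

lemma pevOp_smul (T : Module.End ℂ M) (c : ℂ) (p : ℕ →₀ M) :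
    pevOp T (c • p) = c • pevOp T p := by
  simp only [pevOp_eq_lsum, map_smul]

lemma pev_mapRange (f : M →ₗ[ℂ] M) (l : ℂ) (p : ℕ →₀ M) :
    pev l (Finsupp.mapRange f f.map_zero p) = f (pev l p) := by
  unfold pev
  rw [Finsupp.sum_mapRange_index fun n => smul_zero _, map_finsuppSum]
  simp only [map_smul]

lemma pevOp_mapRange {f T : Module.End ℂ M} (hfT : Commute f T) (p : ℕ →₀ M) :
    pevOp T (Finsupp.mapRange f f.map_zero p) = f (pevOp T p) := by
  unfold pevOp
  rw [Finsupp.sum_mapRange_index fun n => map_zero _, map_finsuppSum]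
  exact Finsupp.sum_congr fun n _ => (LinearMap.congr_fun (hfT.pow_right n).eq _).symm

end Evaluation

namespace Data

variable {R : Type} [AddCommGroup R] [Module ℂ R] (S : Data R)

lemma lb_add_left (l : ℂ) (x y b : R) : S.lb l (x + y) b = S.lb l x b + S.lb l y b := by
  rw [lb, map_add, LinearMap.add_apply, pev_add]; rfl

lemma lb_sub_left (l : ℂ) (x y b : R) : S.lb l (x - y) b = S.lb l x b - S.lb l y b := by
  rw [lb, map_sub, LinearMap.sub_apply, pev_sub]; rfl

lemma lb_smul_left (l c : ℂ) (x b : R) : S.lb l (c • x) b = c • S.lb l x b := by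
  rw [lb, map_smul, LinearMap.smul_apply, pev_smul]; rfl

lemma lb_add_right (l : ℂ) (a x y : R) : S.lb l a (x + y) = S.lb l a x + S.lb l a y := by
  rw [lb, map_add, pev_add]; rfl

lemma lb_sub_right (l : ℂ) (a x y : R) : S.lb l a (x - y) = S.lb l a x - S.lb l a y := by
  rw [lb, map_sub, pev_sub]; rfl

lemma lb_smul_right (l c : ℂ) (a x : R) : S.lb l a (c • x) = c • S.lb l a x := by
  rw [lb, map_smul, pev_smul]; rfl

/-- `[a_λ b]_N`, evaluated at `λ = l`. -/
def lbN (f : R →ₗ[ℂ] R) (l : ℂ) (a b : R) : R :=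
  S.lb l (f a) b + S.lb l a (f b) - f (S.lb l a b)

/-- `[a_{-l-∂} b]_N`. -/
def lbOpN (f : R →ₗ[ℂ] R) (l : ℂ) (a b : R) : R :=
  S.lbOp l (f a) b + S.lbOp l a (f b) - f (S.lbOp l a b)

/-- The deformed data, with `λ`-bracket `[a_λ b] + t [a_λ b]_N`. -/
def deform (f : R →ₗ[ℂ] R) (t : ℂ) : Data R where
  der := S.der
  alpha := S.alpha
  G := S.G
  br := S.br + t • (S.br ∘ₗ f + S.br.compl₂ f - S.br.compr₂ (Finsupp.mapRange.linearMap f))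

lemma deform_der (f : R →ₗ[ℂ] R) (t : ℂ) : (S.deform f t).der = S.der := rfl

lemma deform_br (f : R →ₗ[ℂ] R) (t : ℂ) (a b : R) :
    (S.deform f t).br a b =
      S.br a b + t • (S.br (f a) b + S.br a (f b) - Finsupp.mapRange f f.map_zero (S.br a b)) :=
  rfl

lemma deform_lb (f : R →ₗ[ℂ] R) (t l : ℂ) (a b : R) :
    (S.deform f t).lb l a b = S.lb l a b + t • S.lbN f l a b := by
  rw [lb, deform_br, pev_add, pev_smul, pev_sub, pev_add, pev_mapRange]; rfl

lemma deform_lbOp {f : R →ₗ[ℂ] R} (hder : ∀ a, f (S.der a) = S.der (f a)) (t l : ℂ)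
    (a b : R) : (S.deform f t).lbOp l a b = S.lbOp l a b + t • S.lbOpN f l a b := by
  have hcomm : Commute f ((-l) • 1 - (S.deform f t).der) :=
    ((Commute.one_right f).smul_right _).sub_right (LinearMap.ext hder)
  rw [lbOp, deform_br, pevOp_add, pevOp_smul, pevOp_sub, pevOp_add, pevOp_mapRange hcomm]; rfl

end Data

open Data

variable {R : Type} [AddCommGroup R] [Module ℂ R] {S : Data R} {f : R →ₗ[ℂ] R}

lemma IsHLCS.lbN_der_left (hS : IsHLCS S) (hder : ∀ a, f (S.der a) = S.der (f a)) (l : ℂ)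
    (a b : R) : S.lbN f l (S.der a) b = -l • S.lbN f l a b := by
  simp only [lbN, hder, hS.conf_left, map_smul]
  module

lemma IsHLCS.lbN_der_right (hS : IsHLCS S) (hder : ∀ a, f (S.der a) = S.der (f a)) (l : ℂ)
    (a b : R) : S.lbN f l a (S.der b) = S.der (S.lbN f l a b) + l • S.lbN f l a b := by
  simp only [lbN, hder, hS.conf_right, map_add, map_sub, map_smul]
  module

lemma IsHLCS.lbN_skew (hS : IsHLCS S) (heven : ∀ i, ∀ a ∈ S.G i, f a ∈ S.G i)
    {i j : ZMod 2} {a b : R} (ha : a ∈ S.G i) (hb : b ∈ S.G j) (l : ℂ) :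
    S.lbN f l a b = (-sg i j) • S.lbOpN f l b a := by
  rw [lbN, lbOpN, hS.skew i j a ha b hb, hS.skew i j _ (heven i a ha) b hb,
    hS.skew i j a ha _ (heven j b hb), map_smul]
  module

lemma IsHLCS.deform_br_mem (hS : IsHLCS S) (heven : ∀ i, ∀ a ∈ S.G i, f a ∈ S.G i) (t : ℂ)
    {i j : ZMod 2} {a b : R} (ha : a ∈ S.G i) (hb : b ∈ S.G j) (n : ℕ) :
    (S.deform f t).br a b n ∈ S.G (i + j) := by
  have hab := hS.br_grade i j a ha b hb n
  rw [deform_br]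
  exact add_mem hab <| Submodule.smul_mem _ _ <| sub_mem
    (add_mem (hS.br_grade i j _ (heven i a ha) b hb n) (hS.br_grade i j a ha _ (heven j b hb) n))
    (heven _ _ hab)

lemma IsHLCS.jacobi_lb_lbN (hS : IsHLCS S) (heven : ∀ i, ∀ a ∈ S.G i, f a ∈ S.G i)
    (halpha : ∀ a, f (S.alpha a) = S.alpha (f a))
    {i j : ZMod 2} {a b : R} (ha : a ∈ S.G i) (hb : b ∈ S.G j) (c : R) (l m : ℂ) :
    S.lb l (S.alpha a) (S.lbN f m b c) + S.lbN f l (S.alpha a) (S.lb m b c) =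
      S.lb (l + m) (S.lbN f l a b) (S.alpha c) + S.lbN f (l + m) (S.lb l a b) (S.alpha c) +
        sg i j • (S.lb m (S.alpha b) (S.lbN f l a c) + S.lbN f m (S.alpha b) (S.lb l a c)) := by
  have J := hS.jacobi i j a ha b hb c l m
  have Jfa := hS.jacobi i j _ (heven i a ha) b hb c l m
  have Jfb := hS.jacobi i j a ha _ (heven j b hb) c l m
  have Jfc := hS.jacobi i j a ha b hb (f c) l m
  have fJ := congrArg f J
  simp only [map_add, map_smul] at fJ
  simp only [lbN, lb_add_left, lb_add_right, lb_sub_left, lb_sub_right, halpha]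
  linear_combination (norm := module) Jfa + Jfb + Jfc - fJ

lemma IsHLCS.jacobi_lbN (hS : IsHLCS S) (heven : ∀ i, ∀ a ∈ S.G i, f a ∈ S.G i)
    (halpha : ∀ a, f (S.alpha a) = S.alpha (f a))
    (hNij : ∀ (l : ℂ) (a b : R), S.lb l (f a) (f b) = f (S.lbN f l a b))
    {i j : ZMod 2} {a b : R} (ha : a ∈ S.G i) (hb : b ∈ S.G j) (c : R) (l m : ℂ) :
    S.lbN f l (S.alpha a) (S.lbN f m b c) =
      S.lbN f (l + m) (S.lbN f l a b) (S.alpha c) +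
        sg i j • S.lbN f m (S.alpha b) (S.lbN f l a c) := by
  have hM := congrArg f (hS.jacobi_lb_lbN heven halpha ha hb c l m)
  simp only [map_add, map_smul, ← hNij, halpha] at hM
  have J12 := hS.jacobi i j _ (heven i a ha) _ (heven j b hb) c l m
  have J13 := hS.jacobi i j _ (heven i a ha) b hb (f c) l m
  have J23 := hS.jacobi i j a ha _ (heven j b hb) (f c) l m
  have H2 := congrArg (S.lb l (S.alpha a)) (hNij m b c)
  have H4 := congrArg (S.lb (l + m) · (S.alpha c)) (hNij l a b)
  have H6 := congrArg (S.lb m (S.alpha b)) (hNij l a c)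
  simp only [lbN, map_add, map_sub, lb_add_left, lb_add_right, lb_sub_left, lb_sub_right,
    halpha] at hM H2 H4 H6 ⊢
  linear_combination (norm := module) J12 + J13 + J23 - hM - H2 + H4 + sg i j • H6

lemma IsHLCS.deform_jacobi (hS : IsHLCS S) (heven : ∀ i, ∀ a ∈ S.G i, f a ∈ S.G i)
    (halpha : ∀ a, f (S.alpha a) = S.alpha (f a))
    (hNij : ∀ (l : ℂ) (a b : R), S.lb l (f a) (f b) = f (S.lbN f l a b)) (t : ℂ)
    {i j : ZMod 2} {a b : R} (ha : a ∈ S.G i) (hb : b ∈ S.G j) (c : R) (l m : ℂ) :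
    (S.deform f t).lb l (S.alpha a) ((S.deform f t).lb m b c) =
      (S.deform f t).lb (l + m) ((S.deform f t).lb l a b) (S.alpha c) +
        sg i j • (S.deform f t).lb m (S.alpha b) ((S.deform f t).lb l a c) := by
  simp only [deform_lb, lb_add_left, lb_add_right, lb_smul_left, lb_smul_right]
  linear_combination (norm := module) hS.jacobi i j a ha b hb c l m
    + t • hS.jacobi_lb_lbN heven halpha ha hb c l m
    + t ^ 2 • hS.jacobi_lbN heven halpha hNij ha hb c l m

theorem IsHLCS.deform (hS : IsHLCS S) (heven : ∀ i, ∀ a ∈ S.G i, f a ∈ S.G i)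
    (hder : ∀ a, f (S.der a) = S.der (f a)) (halpha : ∀ a, f (S.alpha a) = S.alpha (f a))
    (hNij : ∀ (l : ℂ) (a b : R), S.lb l (f a) (f b) = f (S.lbN f l a b)) (t : ℂ) :
    IsHLCS (S.deform f t) where
  internal := hS.internal
  der_even := hS.der_even
  alpha_even := hS.alpha_even
  alpha_der := hS.alpha_der
  br_grade _ _ _ ha _ hb := hS.deform_br_mem heven t ha hb
  conf_left l a b := by
    simp only [deform_der, deform_lb, hS.conf_left, hS.lbN_der_left hder]
    module
  conf_right l a b := by
    simp only [deform_der, deform_lb, hS.conf_right, hS.lbN_der_right hder, map_add, map_smul]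
    module
  skew _ _ _ ha _ hb l := by
    rw [deform_lb, deform_lbOp S hder, hS.skew _ _ _ ha _ hb, hS.lbN_skew heven ha hb]
    module
  jacobi _ _ _ ha _ hb c l m := hS.deform_jacobi heven halpha hNij t ha hb c l m

theorem nijenhuis_deformation_general (S : Data R) (hS : IsHLCS S)
    (f : R →ₗ[ℂ] R)
    (heven : ∀ i, ∀ a ∈ S.G i, f a ∈ S.G i)
    (hder : ∀ a, f (S.der a) = S.der (f a))
    (halpha : ∀ a, f (S.alpha a) = S.alpha (f a))
    (hNij : ∀ (l : ℂ) (a b : R),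
      S.lb l (f a) (f b) = f (S.lb l (f a) b + S.lb l a (f b) - f (S.lb l a b)))
    (t : ℂ) :
    ∃ S' : Data R, S'.der = S.der ∧ S'.alpha = S.alpha ∧ S'.G = S.G ∧
      (∀ (l : ℂ) (a b : R),
        S'.lb l a b =
          S.lb l a b + t • (S.lb l (f a) b + S.lb l a (f b) - f (S.lb l a b))) ∧
      IsHLCS S' :=
  ⟨S.deform f t, rfl, rfl, rfl, S.deform_lb f t, hS.deform heven hder halpha hNij t⟩

/-- Let `(R, α)` be a regular Hom-Lie conformal superalgebra and
`f : R → R` an even `ℂ[∂]`-linear map commuting with `α` that is a Hom-Nijenhuis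
operator.  Then for every `t : ℂ`, the deformed bracket
`[a_λ b]_t = [a_λ b] + t [a_λ b]_N`, where
`[a_λ b]_N = [f(a)_λ b] + [a_λ f(b)] - f([a_λ b])`, makes `(R, α)` a Hom-Lie
conformal superalgebra. -/
theorem nijenhuis_deformation (S : Data R) (hS : IsHLCS S)
    (hmult : S.Mult) (hbij : Function.Bijective S.alpha)
    (f : R →ₗ[ℂ] R)
    (heven : ∀ i, ∀ a ∈ S.G i, f a ∈ S.G i)
    (hder : ∀ a, f (S.der a) = S.der (f a))
    (halpha : ∀ a, f (S.alpha a) = S.alpha (f a))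
    (hNij : ∀ (l : ℂ) (a b : R),
      S.lb l (f a) (f b) = f (S.lb l (f a) b + S.lb l a (f b) - f (S.lb l a b)))
    (t : ℂ) :
    ∃ S' : Data R, S'.der = S.der ∧ S'.alpha = S.alpha ∧ S'.G = S.G ∧
      (∀ (l : ℂ) (a b : R),
        S'.lb l a b =
          S.lb l a b + t • (S.lb l (f a) b + S.lb l a (f b) - f (S.lb l a b))) ∧
      IsHLCS S' :=
  nijenhuis_deformation_general S hS f heven hder halpha hNij t

end HLCS
end
end

section
/- Let (R, α) be a multiplicative Hom-Lie conformal superalgebra and Der(R) = ⊕_{k≥0} Der_{α^k}(R) the space of all α^k-derivations, equipped with ∂ acting by (∂D)_λ = −λD_λ, the commutator [D_λ D']_μ(a) = D_λ(D'_{μ−λ}(a)) − (−1)^{|D||D'|} D'_{μ−λ}(D_λ(a)), and the twist α'(D) = D ∘ α. Then (Der(R), α') is a Hom-Lie conformal superalgebra. -/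
/-!
The commutator `[D_λ D']` of an `α^k`- and an `α^s`-derivation is an `α^(k+s)`-derivation because,
when `D_λ D'_{μ-λ}` and `D'_{μ-λ} D_λ` are expanded on a bracket `[a_ν b]` by applying the
derivation rule twice, the two mixed terms of one expansion cancel those of the other,
`(-1)^{|D||D'|}` being a sign. Multiplicativity of `α` makes `D ∘ α` an `α^(k+1)`-derivation.
Sesquilinearity, skew-symmetry and the Hom-Jacobi identity hold for any linear maps commuting
with `α`, with any scalar in place of the super sign that squares to `1`.
-/

noncomputable section

namespace HLCS

variable {R : Type} [AddCommGroup R] [Module ℂ R]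

/-- A homogeneous conformal linear map of parity `d` on `R`, encoded as the family of
its evaluations `F l : R → R` (`l : ℂ`): it is `ℂ`-linear, polynomial in `l`, and
satisfies `F_λ(∂a) = (∂ + λ) F_λ(a)`. -/
structure IsConfMap (S : Data R) (d : ZMod 2) (F : ℂ → R → R) : Prop where
  map_add : ∀ (l : ℂ) (a b : R), F l (a + b) = F l a + F l b
  map_smul : ∀ (l c : ℂ) (a : R), F l (c • a) = c • F l a
  poly : ∀ a : R, ∃ p : ℕ →₀ R, ∀ l : ℂ, F l a = pev l p
  conf : ∀ (l : ℂ) (a : R), F l (S.der a) = S.der (F l a) + l • F l a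
  grade : ∀ i, ∀ a ∈ S.G i, ∀ l : ℂ, F l a ∈ S.G (i + d)

/-- Membership in `Ω`: a homogeneous conformal linear map commuting with `α`. -/
def InOmega (S : Data R) (d : ZMod 2) (F : ℂ → R → R) : Prop :=
  IsConfMap S d F ∧ ∀ (l : ℂ) (a : R), F l (S.alpha a) = S.alpha (F l a)

/-- An `α^k`-derivation of parity `d`. -/
def IsDer (S : Data R) (k : ℕ) (d : ZMod 2) (F : ℂ → R → R) : Prop :=
  InOmega S d F ∧ ∀ i, ∀ a ∈ S.G i, ∀ (b : R) (l m : ℂ),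
    F l (S.lb m a b) =
      S.lb (l + m) (F l a) ((S.alpha ^ k) b) +
        ((-1 : ℂ) ^ ((i * d).val)) • S.lb m ((S.alpha ^ k) a) (F l b)

/-- The commutator `[D_λ D']_μ (a) = D_λ(D'_{μ-λ}(a)) - (-1)^{|D||D'|} D'_{μ-λ}(D_λ(a))`,
with `e = (-1)^{|D||D'|}`; first argument `l` is `λ`, second `m` is `μ`. -/
def brkt (e : ℂ) (F G : ℂ → R → R) : ℂ → ℂ → R → R :=
  fun l m a => F l (G (m - l) a) - e • G (m - l) (F l a)

/-- The twist `α'(D) = D ∘ α`. -/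
def tw (S : Data R) (F : ℂ → R → R) : ℂ → R → R := fun l a => F l (S.alpha a)

/-- A generalized `α^k`-derivation of parity `d`. -/
def IsGDer (S : Data R) (k : ℕ) (d : ZMod 2) (F : ℂ → R → R) : Prop :=
  InOmega S d F ∧ ∃ F' F'' : ℂ → R → R, InOmega S d F' ∧ InOmega S d F'' ∧
    ∀ i, ∀ a ∈ S.G i, ∀ (b : R) (l m : ℂ),
      S.lb (l + m) (F m a) ((S.alpha ^ k) b) +
        ((-1 : ℂ) ^ ((d * i).val)) • S.lb l ((S.alpha ^ k) a) (F' m b) = F'' m (S.lb l a b)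

/-- An `α^k`-quasiderivation of parity `d`. -/
def IsQDer (S : Data R) (k : ℕ) (d : ZMod 2) (F : ℂ → R → R) : Prop :=
  InOmega S d F ∧ ∃ F' : ℂ → R → R, InOmega S d F' ∧
    ∀ i, ∀ a ∈ S.G i, ∀ (b : R) (l m : ℂ),
      S.lb (l + m) (F m a) ((S.alpha ^ k) b) +
        ((-1 : ℂ) ^ ((d * i).val)) • S.lb l ((S.alpha ^ k) a) (F m b) = F' m (S.lb l a b)

/-- An `α^k`-centroid of parity `d`. -/
def IsCent (S : Data R) (k : ℕ) (d : ZMod 2) (F : ℂ → R → R) : Prop :=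
  InOmega S d F ∧ ∀ i, ∀ a ∈ S.G i, ∀ (b : R) (l m : ℂ),
    S.lb (l + m) (F m a) ((S.alpha ^ k) b) =
      ((-1 : ℂ) ^ ((d * i).val)) • S.lb l ((S.alpha ^ k) a) (F m b) ∧
    S.lb (l + m) (F m a) ((S.alpha ^ k) b) = F m (S.lb l a b)

/-- An `α^k`-quasicentroid of parity `d`. -/
def IsQC (S : Data R) (k : ℕ) (d : ZMod 2) (F : ℂ → R → R) : Prop :=
  InOmega S d F ∧ ∀ i, ∀ a ∈ S.G i, ∀ (b : R) (l m : ℂ),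
    S.lb (l + m) (F m a) ((S.alpha ^ k) b) =
      ((-1 : ℂ) ^ ((d * i).val)) • S.lb l ((S.alpha ^ k) a) (F m b)

/-- An `α^k`-central derivation of parity `d`. -/
def IsZDer (S : Data R) (k : ℕ) (d : ZMod 2) (F : ℂ → R → R) : Prop :=
  InOmega S d F ∧ ∀ (a b : R) (l m : ℂ),
    S.lb (l + m) (F m a) ((S.alpha ^ k) b) = 0 ∧ F m (S.lb l a b) = 0

/-- Membership in the center `Z(R)`. -/
def IsCentral (S : Data R) (x : R) : Prop := ∀ (l : ℂ) (y : R), S.lb l x y = 0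

end HLCS
namespace HLCS

variable {R : Type} [AddCommGroup R] [Module ℂ R]

lemma sg_comm (i j : ZMod 2) : sg i j = sg j i := by
  rw [sg, sg, mul_comm]

lemma sg_add_right (i j j' : ZMod 2) : sg i (j + j') = sg i j * sg i j' := by
  rw [sg, sg, sg, mul_add, ZMod.val_add, ← pow_add]
  exact (neg_one_pow_eq_pow_mod_two _).symm

lemma sg_add_left (i i' j : ZMod 2) : sg (i + i') j = sg i j * sg i' j := by
  rw [sg_comm, sg_add_right, sg_comm j, sg_comm j]

lemma sg_mul_self (i j : ZMod 2) : sg i j * sg i j = 1 := by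
  rw [sg, ← pow_add, ← two_mul, pow_mul, neg_one_sq, one_pow]

section Bracket

variable (S : Data R)

def pevₗ (l : ℂ) : (ℕ →₀ R) →ₗ[ℂ] R := Finsupp.lsum ℂ fun n => l ^ n • LinearMap.id

lemma lb_eq_pevₗ (l : ℂ) (a b : R) : S.lb l a b = pevₗ l (S.br a b) := rfl

lemma lb_sub_left (l : ℂ) (a b c : R) : S.lb l (a - b) c = S.lb l a c - S.lb l b c := by
  simp only [lb_eq_pevₗ, map_sub, LinearMap.sub_apply]

lemma lb_smul_left (l c : ℂ) (a b : R) : S.lb l (c • a) b = c • S.lb l a b := by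
  simp only [lb_eq_pevₗ, map_smul, LinearMap.smul_apply]

lemma lb_sub_right (l : ℂ) (a b c : R) : S.lb l a (b - c) = S.lb l a b - S.lb l a c := by
  simp only [lb_eq_pevₗ, map_sub]

lemma lb_smul_right (l c : ℂ) (a b : R) : S.lb l a (c • b) = c • S.lb l a b := by
  simp only [lb_eq_pevₗ, map_smul]

end Bracket

section ConfMap

variable {S : Data R} {d d' : ZMod 2} {F G : ℂ → R → R}

lemma pev_eq_eval (l : ℂ) (p : ℕ →₀ R) :
    pev l p = PolynomialModule.eval l (PolynomialModule.ofCoeff ℂ p) := rfl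

lemma IsConfMap.isLinearMap (hF : IsConfMap S d F) (l : ℂ) : IsLinearMap ℂ (F l) :=
  ⟨hF.map_add l, hF.map_smul l⟩

lemma alpha_pow_mem (hS : IsHLCS S) {i : ZMod 2} {a : R} (ha : a ∈ S.G i) (n : ℕ) :
    (S.alpha ^ n) a ∈ S.G i := by
  rw [Module.End.pow_apply]
  exact Set.MapsTo.iterate (hS.alpha_even i) n ha

lemma apply_alpha_pow_of_commute {f : R → R} (h : ∀ a, f (S.alpha a) = S.alpha (f a))
    (n : ℕ) (a : R) :
    f ((S.alpha ^ n) a) = (S.alpha ^ n) (f a) := by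
  simp only [Module.End.pow_apply]
  exact (Function.Commute.iterate_right h n) a

open Polynomial PolynomialModule in
theorem IsConfMap.brkt (hF : IsConfMap S d F) (hG : IsConfMap S d' G) (e l : ℂ) :
    IsConfMap S (d + d') (brkt e F G l) where
  map_add m a b := by
    simp only [HLCS.brkt, hF.map_add, hG.map_add, smul_add]
    abel
  map_smul m c a := by
    simp only [HLCS.brkt, hF.map_smul, hG.map_smul]
    module
  poly a := by
    obtain ⟨q, hq⟩ := hG.poly a
    obtain ⟨q', hq'⟩ := hG.poly (F l a)
    -- the coefficient polynomial of `G_{μ-λ} a` in `μ` is `q(X - λ)`, where `q` is that of `G_λ a`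
    let shift : PolynomialModule ℂ R →ₗ[ℂ] PolynomialModule ℂ R := comp (X - C l)
    refine ⟨(map ℂ (hF.isLinearMap l).mk' (shift (ofCoeff ℂ q)) -
      e • shift (ofCoeff ℂ q')).coeff, fun m => ?_⟩
    rw [pev_eq_eval, ofCoeff_coeff, map_sub, LinearMap.map_smul, eval_map', comp_eval, comp_eval]
    simp only [eval_sub, eval_X, eval_C, ← pev_eq_eval, ← hq, ← hq']
    rfl
  conf m a := by
    simp only [HLCS.brkt, hF.conf, hG.conf, hF.map_add, hF.map_smul, hG.map_add, hG.map_smul,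
      map_sub, LinearMap.map_smul]
    module
  grade i a ha m := by
    have hFG := hF.grade _ _ (hG.grade i a ha (m - l)) l
    have hGF := hG.grade _ _ (hF.grade i a ha l) (m - l)
    rw [add_assoc, add_comm d'] at hFG
    rw [add_assoc] at hGF
    exact Submodule.sub_mem _ hFG (Submodule.smul_mem _ _ hGF)

end ConfMap

section Der

variable {S : Data R} {k s : ℕ} {d d' : ZMod 2} {F G : ℂ → R → R}

theorem InOmega.tw (hS : IsHLCS S) (hF : InOmega S d F) : InOmega S d (tw S F) := by
  obtain ⟨hFc, hFα⟩ := hF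
  refine ⟨⟨fun l a b => ?_, fun l c a => ?_, fun a => hFc.poly (S.alpha a), fun l a => ?_,
    fun i a ha l => hFc.grade i _ (hS.alpha_even i a ha) l⟩, fun l a => hFα l (S.alpha a)⟩
  · simp only [HLCS.tw, map_add, hFc.map_add]
  · simp only [HLCS.tw, LinearMap.map_smul, hFc.map_smul]
  · simp only [HLCS.tw, hS.alpha_der, hFc.conf]

theorem IsDer.tw (hS : IsHLCS S) (hmult : S.Mult) (hF : IsDer S k d F) :
    IsDer S (k + 1) d (tw S F) := by
  refine ⟨hF.1.tw hS, fun i a ha b l m => ?_⟩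
  change F l (S.alpha (S.lb m a b)) = _
  rw [hmult m a b, hF.2 i _ (hS.alpha_even i a ha)]
  simp only [HLCS.tw, pow_succ, Module.End.mul_apply]

theorem InOmega.brkt (hF : InOmega S d F) (hG : InOmega S d' G) (e l : ℂ) :
    InOmega S (d + d') (brkt e F G l) :=
  ⟨hF.1.brkt hG.1 e l, fun m a => by
    simp only [HLCS.brkt, hF.2, hG.2, map_sub, LinearMap.map_smul]⟩

theorem IsDer.apply_apply_lb (hS : IsHLCS S) (hF : IsDer S k d F) (hG : IsDer S s d' G)
    {i : ZMod 2} {a : R} (ha : a ∈ S.G i) (b : R) (l w m : ℂ) :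
    F l (G w (S.lb m a b)) =
      S.lb (l + w + m) (F l (G w a)) ((S.alpha ^ (k + s)) b) +
      (sg i d * sg d' d) • S.lb (w + m) (G w ((S.alpha ^ k) a)) (F l ((S.alpha ^ s) b)) +
      sg i d' • S.lb (l + m) (F l ((S.alpha ^ s) a)) (G w ((S.alpha ^ k) b)) +
      (sg i d' * sg i d) • S.lb m ((S.alpha ^ (k + s)) a) (F l (G w b)) := by
  obtain ⟨⟨hFc, -⟩, hFd⟩ := hF
  obtain ⟨⟨hGc, hGα⟩, hGd⟩ := hG
  rw [hGd i a ha b w m, hFc.map_add, hFc.map_smul, hFd _ _ (hGc.grade i a ha w),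
    hFd i _ (alpha_pow_mem hS ha s)]
  simp only [← apply_alpha_pow_of_commute (hGα w), ← Module.End.mul_apply, ← pow_add]
  change _ + sg (i + d') d • _ + sg i d' • (_ + sg i d • _) = _
  rw [sg_add_left, smul_add, smul_smul]
  simp only [add_assoc]

theorem IsDer.brkt (hS : IsHLCS S) (hF : IsDer S k d F) (hG : IsDer S s d' G) (l : ℂ) :
    IsDer S (k + s) (d + d') (brkt (sg d d') F G l) := by
  refine ⟨hF.1.brkt hG.1 _ l, fun i a ha b v m => ?_⟩
  have hFG := hF.apply_apply_lb hS hG ha b l (v - l) m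
  have hGF := hG.apply_apply_lb hS hF ha b (v - l) l m
  rw [show (-1 : ℂ) ^ (i * (d + d')).val = sg i d * sg i d' from sg_add_right i d d']
  simp only [HLCS.brkt, hFG, hGF, lb_sub_left, lb_sub_right, lb_smul_left, lb_smul_right]
  rw [sg_comm d' d, add_comm s k, show l + (v - l) + m = v + m by ring,
    show v - l + l + m = v + m by ring]
  -- the mixed terms cancel because `sg d d'` is a sign
  rcases mul_self_eq_one_iff.mp (sg_mul_self d d') with h | h <;> rw [h] <;> module

end Der

section Commutator

variable {S : Data R} {F G H : ℂ → R → R}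

lemma brkt_neg_smul_left (e : ℂ) (hG : ∀ (v c : ℂ) (b : R), G v (c • b) = c • G v b)
    (l m : ℂ) (a : R) :
    brkt e (fun v b => -v • F v b) G l m a = -l • brkt e F G l m a := by
  simp only [HLCS.brkt, hG]
  module

lemma brkt_neg_smul_right (e : ℂ) (hF : ∀ (v c : ℂ) (b : R), F v (c • b) = c • F v b)
    (l m : ℂ) (a : R) :
    brkt e F (fun v b => -v • G v b) l m a = (-m + l) • brkt e F G l m a := by
  simp only [HLCS.brkt, hF]
  module

lemma brkt_swap {e : ℂ} (he : e * e = 1) (F G : ℂ → R → R) (l m : ℂ) (a : R) :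
    brkt e F G l m a = -e • brkt e G F (m - l) m a := by
  simp only [HLCS.brkt, sub_sub_cancel]
  rcases mul_self_eq_one_iff.mp he with rfl | rfl <;> module

theorem brkt_tw_jacobi {e₁ e₂ e₃ : ℂ} (he₁ : e₁ * e₁ = 1)
    (hF : ∀ v, IsLinearMap ℂ (F v)) (hG : ∀ v, IsLinearMap ℂ (G v))
    (hH : ∀ v, IsLinearMap ℂ (H v)) (hFα : ∀ v a, F v (S.alpha a) = S.alpha (F v a))
    (hGα : ∀ v a, G v (S.alpha a) = S.alpha (G v a))
    (hHα : ∀ v a, H v (S.alpha a) = S.alpha (H v a)) (l m t : ℂ) (a : R) :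
    brkt (e₁ * e₂) (tw S F) (brkt e₃ G H m) l t a =
      brkt (e₂ * e₃) (brkt e₁ F G l) (tw S H) (l + m) t a +
        e₁ • brkt (e₁ * e₃) (tw S G) (brkt e₂ F H l) m t a := by
  simp only [HLCS.brkt, HLCS.tw, (hF _).map_sub, (hG _).map_sub, (hH _).map_sub,
    (hF _).map_smul, (hG _).map_smul, (hH _).map_smul, map_sub, LinearMap.map_smul, hFα, hGα, hHα]
  rw [show t - m - l = t - l - m by ring, show l + m - l = m by ring,
    show t - (l + m) = t - l - m by ring]
  rcases mul_self_eq_one_iff.mp he₁ with rfl | rfl <;> module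

end Commutator

end HLCS
namespace HLCS

variable {R : Type} [AddCommGroup R] [Module ℂ R]

/-- For a multiplicative Hom-Lie conformal superalgebra `(R, α)`,
the space `Der(R) = ⊕_k Der_{α^k}(R)` with `(∂D)_λ = -λ D_λ`, the commutator
`[D_λ D']_μ = D_λ D'_{μ-λ} - (-1)^{|D||D'|} D'_{μ-λ} D_λ` and the twist
`α'(D) = D ∘ α` is a Hom-Lie conformal superalgebra: it is closed under the twist
and the bracket, and the bracket satisfies conformal sesquilinearity,
skew-symmetry and the Hom-Jacobi identity (all identities stated on evaluations). -/
theorem der_homLie (S : Data R) (hS : IsHLCS S) (hmult : S.Mult)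
    (k s u : ℕ) (d d' d'' : ZMod 2) (F G H : ℂ → R → R)
    (hF : IsDer S k d F) (hG : IsDer S s d' G) (hH : IsDer S u d'' H) :
    -- the twist `α'` maps `Der_{α^k}` to `Der_{α^{k+1}}`
    IsDer S (k + 1) d (tw S F) ∧
    -- closure of the bracket
    (∀ l : ℂ, IsDer S (k + s) (d + d') (brkt ((-1 : ℂ) ^ ((d * d').val)) F G l)) ∧
    -- conformal sesquilinearity `[(∂D)_λ D'] = -λ [D_λ D']`
    (∀ (l m : ℂ) (a : R),
      brkt ((-1 : ℂ) ^ ((d * d').val)) (fun v b => -v • F v b) G l m a =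
        -l • brkt ((-1 : ℂ) ^ ((d * d').val)) F G l m a) ∧
    -- conformal sesquilinearity `[D_λ (∂D')] = (∂ + λ)[D_λ D']`
    (∀ (l m : ℂ) (a : R),
      brkt ((-1 : ℂ) ^ ((d * d').val)) F (fun v b => -v • G v b) l m a =
        (-m + l) • brkt ((-1 : ℂ) ^ ((d * d').val)) F G l m a) ∧
    -- skew-symmetry `[D_λ D'] = -(-1)^{|D||D'|} [D'_{-λ-∂} D]`
    (∀ (l m : ℂ) (a : R),
      brkt ((-1 : ℂ) ^ ((d * d').val)) F G l m a =
        (-((-1 : ℂ) ^ ((d * d').val))) •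
          brkt ((-1 : ℂ) ^ ((d * d').val)) G F (m - l) m a) ∧
    -- the Hom-Jacobi identity
    (∀ (l m t : ℂ) (a : R),
      brkt ((-1 : ℂ) ^ ((d * (d' + d'')).val)) (tw S F)
          (brkt ((-1 : ℂ) ^ ((d' * d'').val)) G H m) l t a =
        brkt ((-1 : ℂ) ^ (((d + d') * d'').val))
            (brkt ((-1 : ℂ) ^ ((d * d').val)) F G l) (tw S H) (l + m) t a +
          ((-1 : ℂ) ^ ((d * d').val)) •
            brkt ((-1 : ℂ) ^ ((d' * (d + d'')).val)) (tw S G)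
              (brkt ((-1 : ℂ) ^ ((d * d'').val)) F H l) m t a) := by
  refine ⟨hF.tw hS hmult, hF.brkt hS hG, brkt_neg_smul_left _ hG.1.1.map_smul,
    brkt_neg_smul_right _ hF.1.1.map_smul, brkt_swap (sg_mul_self d d') F G, fun l m t a => ?_⟩
  rw [show (-1 : ℂ) ^ (d * (d' + d'')).val = sg d d' * sg d d'' from sg_add_right _ _ _,
    show (-1 : ℂ) ^ ((d + d') * d'').val = sg d d'' * sg d' d'' from sg_add_left _ _ _,
    show (-1 : ℂ) ^ (d' * (d + d'')).val = sg d d' * sg d' d'' by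
      rw [sg_comm d]; exact sg_add_right _ _ _]
  exact brkt_tw_jacobi (sg_mul_self d d') hF.1.1.isLinearMap hG.1.1.isLinearMap
    hH.1.1.isLinearMap hF.1.2 hG.1.2 hH.1.2 l m t a

end HLCS
end
end
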